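/- Over the unary alphabet Σ = {a}, for every C-RASP program P (with no positional relations) there exists n ∈ ℕ such that for all words w with |w| ≥ n, either P accepts all such w or P rejects all such w. -/

import Mathlib

/-! On a unary word the value of an operation at position `i` does not depend on the length of
the word beyond `i`, so each operation of a program is a function of `i` alone. By induction on
the program, Boolean operations are eventually constant and count operations are eventually
linear, `a * i + b`: counting an eventually constant predicate is eventually linear, and a
comparison of two linear functions is eventually constant. -/

mutual
/-- Syntax of C-RASP programs without positional relations: Boolean-valued
operations. A program (a sequence of operations, each possibly referring to
earlier ones) is represented by the expression tree of its final
Boolean-valued operation. -/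
inductive BExpr (α : Type) : Type
  | tok : α → BExpr α                      -- initial operation `Q_σ(i)`
  | not : BExpr α → BExpr α                -- Boolean negation
  | and : BExpr α → BExpr α → BExpr α      -- Boolean conjunction
  | top : BExpr α                          -- constant ⊤
  | le  : CExpr α → CExpr α → BExpr α      -- comparison `C₁(i) ≤ C₂(i)`
/-- Count-valued C-RASP operations. -/
inductive CExpr (α : Type) : Type
  | count : BExpr α → CExpr α              -- `#{j ≤ i : P(j)}`
  | cond  : BExpr α → CExpr α → CExpr α → CExpr α  -- conditional
  | add : CExpr α → CExpr α → CExpr α      -- addition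
  | sub : CExpr α → CExpr α → CExpr α      -- subtraction
  | one : CExpr α                          -- constant 1
end

mutual
/-- Evaluation of a Boolean-valued C-RASP operation on word `w` at
(0-based) position `i`. -/
def BExpr.eval {α : Type} [DecidableEq α] (w : List α) : BExpr α → ℕ → Bool
  | .tok σ, i => decide (w[i]? = some σ)
  | .not b, i => ! b.eval w i
  | .and b₁ b₂, i => b₁.eval w i && b₂.eval w i
  | .top, _ => true
  | .le c₁ c₂, i => decide (c₁.eval w i ≤ c₂.eval w i)
/-- Evaluation of a count-valued C-RASP operation on word `w` at position `i`. -/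
def CExpr.eval {α : Type} [DecidableEq α] (w : List α) : CExpr α → ℕ → ℤ
  | .count b, i => ((List.range (i + 1)).countP (fun j => b.eval w j) : ℤ)
  | .cond b c₁ c₂, i => if b.eval w i then c₁.eval w i else c₂.eval w i
  | .add c₁ c₂, i => c₁.eval w i + c₂.eval w i
  | .sub c₁ c₂, i => c₁.eval w i - c₂.eval w i
  | .one, _ => 1
end

/-- A C-RASP program accepts a word iff its final Boolean-valued operation is
true at the last position of the word. -/
def BExpr.accepts {α : Type} [DecidableEq α] (P : BExpr α) (w : List α) : Prop :=
  P.eval w (w.length - 1) = true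

open Filter

mutual
theorem BExpr.eval_congr {α : Type} [DecidableEq α] {w w' : List α} (e : BExpr α) (i : ℕ)
    (h : ∀ j ≤ i, w[j]? = w'[j]?) : e.eval w i = e.eval w' i := by
  cases e with
  | tok σ => simp only [BExpr.eval, h i le_rfl]
  | not b => simp only [BExpr.eval, b.eval_congr i h]
  | and b₁ b₂ => simp only [BExpr.eval, b₁.eval_congr i h, b₂.eval_congr i h]
  | top => rfl
  | le c₁ c₂ => simp only [BExpr.eval, c₁.eval_congr i h, c₂.eval_congr i h]
theorem CExpr.eval_congr {α : Type} [DecidableEq α] {w w' : List α} (c : CExpr α) (i : ℕ)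
    (h : ∀ j ≤ i, w[j]? = w'[j]?) : c.eval w i = c.eval w' i := by
  cases c with
  | count b =>
    simp only [CExpr.eval]
    congr 1
    refine List.countP_congr fun j hj => ?_
    have hji : j ≤ i := Nat.lt_succ_iff.mp (List.mem_range.mp hj)
    rw [b.eval_congr j fun k hk => h k (hk.trans hji)]
  | cond b c₁ c₂ =>
    simp only [CExpr.eval, b.eval_congr i h, c₁.eval_congr i h, c₂.eval_congr i h]
  | add c₁ c₂ => simp only [CExpr.eval, c₁.eval_congr i h, c₂.eval_congr i h]
  | sub c₁ c₂ => simp only [CExpr.eval, c₁.eval_congr i h, c₂.eval_congr i h]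
  | one => rfl
end

theorem BExpr.eval_replicate_of_le (e : BExpr Unit) {i j : ℕ} (hij : j ≤ i) :
    e.eval (List.replicate (i + 1) ()) j = e.eval (List.replicate (j + 1) ()) j :=
  e.eval_congr j fun k hk => by simp [show k < i + 1 by omega, show k < j + 1 by omega]

theorem eventually_decide_nonneg_linear (a b : ℤ) :
    ∃ v : Bool, ∀ᶠ i : ℕ in atTop, decide (0 ≤ a * i + b) = v := by
  rcases lt_trichotomy a 0 with ha | rfl | ha
  · refine ⟨false, (eventually_gt_atTop b.natAbs).mono fun i hi => ?_⟩
    have : |b| < (i : ℤ) := by rw [Int.abs_eq_natAbs]; exact_mod_cast hi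
    simp only [decide_eq_false_iff_not, not_le]
    nlinarith [le_abs_self b]
  · exact ⟨decide (0 ≤ b), Eventually.of_forall fun i => by simp⟩
  · refine ⟨true, (eventually_ge_atTop b.natAbs).mono fun i hi => ?_⟩
    have : |b| ≤ (i : ℤ) := by rw [Int.abs_eq_natAbs]; exact_mod_cast hi
    simp only [decide_eq_true_iff]
    nlinarith [neg_abs_le b]

theorem eventually_countP_range_linear {f : ℕ → Bool} {v : Bool}
    (hf : ∀ᶠ i in atTop, f i = v) :
    ∃ a b : ℤ, ∀ᶠ i : ℕ in atTop, ((List.range (i + 1)).countP f : ℤ) = a * i + b := by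
  obtain ⟨n, hn⟩ := eventually_atTop.1 hf
  refine ⟨v.toNat, (List.range (n + 1)).countP f - v.toNat * n,
    (eventually_ge_atTop n).mono fun i hi => ?_⟩
  induction i, hi using Nat.le_induction with
  | base => ring
  | succ i hi ih =>
    rw [List.range_succ, List.countP_append, List.countP_singleton, hn (i + 1) (by omega)]
    push_cast
    rw [ih]
    cases v <;> simp [add_right_comm]

mutual
theorem BExpr.eventually_eval_replicate_const (e : BExpr Unit) :
    ∃ v : Bool, ∀ᶠ i in atTop, e.eval (List.replicate (i + 1) ()) i = v := by
  cases e with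
  | tok σ => exact ⟨true, Eventually.of_forall fun i => by simp [BExpr.eval]⟩
  | not b =>
    obtain ⟨v, hv⟩ := b.eventually_eval_replicate_const
    exact ⟨!v, hv.mono fun i hi => by simp only [BExpr.eval, hi]⟩
  | and b₁ b₂ =>
    obtain ⟨v₁, h₁⟩ := b₁.eventually_eval_replicate_const
    obtain ⟨v₂, h₂⟩ := b₂.eventually_eval_replicate_const
    exact ⟨v₁ && v₂, (h₁.and h₂).mono fun i ⟨e₁, e₂⟩ => by simp only [BExpr.eval, e₁, e₂]⟩
  | top => exact ⟨true, Eventually.of_forall fun i => rfl⟩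
  | le c₁ c₂ =>
    obtain ⟨a₁, b₁, h₁⟩ := c₁.eventually_eval_replicate_linear
    obtain ⟨a₂, b₂, h₂⟩ := c₂.eventually_eval_replicate_linear
    obtain ⟨v, hv⟩ := eventually_decide_nonneg_linear (a₂ - a₁) (b₂ - b₁)
    refine ⟨v, (h₁.and (h₂.and hv)).mono fun i ⟨e₁, e₂, ev⟩ => ?_⟩
    rw [← ev, BExpr.eval, e₁, e₂]
    exact decide_eq_decide.2 ⟨fun h => by linarith, fun h => by linarith⟩
theorem CExpr.eventually_eval_replicate_linear (c : CExpr Unit) :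
    ∃ a b : ℤ, ∀ᶠ i : ℕ in atTop, c.eval (List.replicate (i + 1) ()) i = a * i + b := by
  cases c with
  | count b =>
    obtain ⟨v, hv⟩ := b.eventually_eval_replicate_const
    obtain ⟨a, b', h⟩ := eventually_countP_range_linear hv
    refine ⟨a, b', h.mono fun i hi => ?_⟩
    rw [CExpr.eval, ← hi]
    congr 1
    exact List.countP_congr fun j hj => by
      rw [b.eval_replicate_of_le (Nat.lt_succ_iff.mp (List.mem_range.mp hj))]
  | cond b c₁ c₂ =>
    obtain ⟨v, hv⟩ := b.eventually_eval_replicate_const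
    obtain ⟨a₁, b₁, h₁⟩ := c₁.eventually_eval_replicate_linear
    obtain ⟨a₂, b₂, h₂⟩ := c₂.eventually_eval_replicate_linear
    refine ⟨if v then a₁ else a₂, if v then b₁ else b₂,
      (hv.and (h₁.and h₂)).mono fun i ⟨ev, e₁, e₂⟩ => ?_⟩
    cases v <;> simp [CExpr.eval, ev, e₁, e₂]
  | add c₁ c₂ =>
    obtain ⟨a₁, b₁, h₁⟩ := c₁.eventually_eval_replicate_linear
    obtain ⟨a₂, b₂, h₂⟩ := c₂.eventually_eval_replicate_linear
    exact ⟨a₁ + a₂, b₁ + b₂, (h₁.and h₂).mono fun i ⟨e₁, e₂⟩ => by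
      rw [CExpr.eval, e₁, e₂]; ring⟩
  | sub c₁ c₂ =>
    obtain ⟨a₁, b₁, h₁⟩ := c₁.eventually_eval_replicate_linear
    obtain ⟨a₂, b₂, h₂⟩ := c₂.eventually_eval_replicate_linear
    exact ⟨a₁ - a₂, b₁ - b₂, (h₁.and h₂).mono fun i ⟨e₁, e₂⟩ => by
      rw [CExpr.eval, e₁, e₂]; ring⟩
  | one => exact ⟨0, 1, Eventually.of_forall fun i => by simp [CExpr.eval]⟩
end

/-- Over the unary alphabet, every C-RASP program (with no positional
relations) eventually gives a constant answer: there is `n` such that it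
either accepts all words of length `≥ n` or rejects all of them. -/
theorem stmt11 (P : BExpr Unit) :
    ∃ n : ℕ,
      (∀ m : ℕ, n ≤ m → P.accepts (List.replicate m ())) ∨
      (∀ m : ℕ, n ≤ m → ¬ P.accepts (List.replicate m ())) := by
  obtain ⟨v, hv⟩ := P.eventually_eval_replicate_const
  obtain ⟨n, hn⟩ := eventually_atTop.1 hv
  have accepts_iff : ∀ m, n + 1 ≤ m → (P.accepts (List.replicate m ()) ↔ v = true) := by
    intro m hm
    obtain ⟨i, rfl⟩ : ∃ i, m = i + 1 := ⟨m - 1, by omega⟩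
    rw [BExpr.accepts, List.length_replicate, Nat.add_sub_cancel, hn i (by omega)]
  refine ⟨n + 1, ?_⟩
  cases v
  · exact Or.inr fun m hm => by simp [accepts_iff m hm]
  · exact Or.inl fun m hm => (accepts_iff m hm).2 rfl
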